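/- arXiv:1710.01939 — 9 statements merged into one kernel-verified Lean document; each statement's English description precedes it below -/
import Mathlib

section
/- Define n₁ = 1 and n_{k+1} = 2^{2n_k + 2}. Let A_k = {n_k + 1, n_k + 2, ..., n_k + 2^{n_k + 1}} ∪ {3·2^{n_k}, 4·2^{n_k}, ..., (2^{n_k+1} + 2)·2^{n_k}} and A = ⋃_k A_k. Then for every integer n ≥ 4, there exist a, b ∈ A with a < b < n such that 2b = a + n. -/
/-- The recursive sequence: n₁ = 1, n_{k+1} = 2^{2 n_k + 2} (indexed from 0). -/
def nSeq : ℕ → ℕ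
  | 0 => 1
  | k + 1 => 2 ^ (2 * nSeq k + 2)

/-- A_k = [n_k+1, n_k+2^{n_k+1}] ∪ {j·2^{n_k} : 3 ≤ j ≤ 2^{n_k+1}+2}. -/
def Ablock (k : ℕ) : Set ℕ :=
  {m | (nSeq k + 1 ≤ m ∧ m ≤ nSeq k + 2 ^ (nSeq k + 1)) ∨
       ∃ j : ℕ, 3 ≤ j ∧ j ≤ 2 ^ (nSeq k + 1) + 2 ∧ m = j * 2 ^ (nSeq k)}

/-! Let `m = n_k` be the largest term with `m + 3 ≤ n`, so that `n ≤ n_{k+1} + 2 = 2^{2m+2} + 2`.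
If `n ≤ m + 2^{m+1}`, take `a ∈ {m + 1, m + 2}` of the parity of `n` and `b = (a + n) / 2`: both lie
in the interval part of `A_k`. Otherwise choose `b = j·2^m` with `2b ∈ (n + m, n + m + 2^{m+1}]`:
then `a = 2b - n` lies in the interval part, `b < n` because `n > m + 2^{m+1}`, and the bound
`n ≤ 2^{2m+2} + 2` forces `j ≤ 2^{m+1} + 2`. -/

lemma nSeq_strictMono : StrictMono nSeq :=
  strictMono_nat_of_lt_succ fun k =>
    (Nat.lt_two_pow_self).trans_le (Nat.pow_le_pow_right two_pos (by omega))

lemma nSeq_succ (k : ℕ) : nSeq (k + 1) = 2 ^ (nSeq k + 1) * 2 ^ (nSeq k + 1) := by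
  rw [← pow_add, nSeq]
  ring_nf

lemma add_three_le_two_pow_succ {m : ℕ} (hm : 1 ≤ m) : m + 3 ≤ 2 ^ (m + 1) := by
  have := Nat.lt_two_pow_self (n := m)
  rw [pow_succ]
  omega

lemma mem_Ablock_of_le {k x : ℕ} (h₁ : nSeq k + 1 ≤ x) (h₂ : x ≤ nSeq k + 2 ^ (nSeq k + 1)) :
    x ∈ Ablock k :=
  Or.inl ⟨h₁, h₂⟩

lemma mul_two_pow_mem_Ablock {k j : ℕ} (h₁ : 2 ≤ j) (h₂ : j ≤ 2 ^ (nSeq k + 1) + 2) :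
    j * 2 ^ nSeq k ∈ Ablock k := by
  rcases h₁.eq_or_lt with rfl | h₁
  · have := Nat.lt_two_pow_self (n := nSeq k + 1)
    exact mem_Ablock_of_le (by rw [← pow_succ']; omega) (by rw [← pow_succ']; omega)
  · exact Or.inr ⟨j, h₁, h₂, rfl⟩

lemma exists_mul_mem_Ioc (N : ℕ) {q : ℕ} (hq : 0 < q) : ∃ j, N < q * j ∧ q * j ≤ N + q := by
  refine ⟨N / q + 1, ?_, ?_⟩ <;> rw [mul_add, mul_one]
  · rw [mul_comm]
    exact Nat.lt_div_mul_add hq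
  · exact Nat.add_le_add_right (Nat.mul_div_le N q) q

lemma exists_ap_near (m n : ℕ) (hn : m + 3 ≤ n) :
    ∃ a b, m + 1 ≤ a ∧ a < b ∧ b < n ∧ 2 * b = a + n :=
  ⟨m + 1 + (n - m - 1) % 2, (m + 1 + (n - m - 1) % 2 + n) / 2, by omega, by omega, by omega,
    by omega⟩

lemma exists_ap_mul {m d n : ℕ} (hd : m + 2 < 2 * d) (hn : m + 2 * d < n)
    (hn' : n ≤ 2 * d * (2 * d) + 2) :
    ∃ a j, m + 1 ≤ a ∧ a ≤ m + 2 * d ∧ 2 ≤ j ∧ j ≤ 2 * d + 2 ∧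
      a < j * d ∧ j * d < n ∧ 2 * (j * d) = a + n := by
  obtain ⟨j, hj₁, hj₂⟩ := exists_mul_mem_Ioc (n + m) (q := 2 * d) (by omega)
  have hj_ge : 2 ≤ j := by
    by_contra! h
    have : 2 * d * j ≤ 2 * d * 1 := Nat.mul_le_mul_left _ (by omega)
    omega
  have hj_le : j ≤ 2 * d + 2 := by
    by_contra! h
    have : 2 * d * (2 * d + 3) ≤ 2 * d * j := Nat.mul_le_mul_left _ h
    nlinarith
  have hjd : 2 * (j * d) = 2 * d * j := by ring
  exact ⟨2 * d * j - n, j, by omega, by omega, hj_ge, hj_le, by omega, by omega, by omega⟩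

lemma exists_ap_Ablock {k n : ℕ} (hn : nSeq k + 3 ≤ n) (hn' : n ≤ nSeq (k + 1) + 2) :
    ∃ a ∈ Ablock k, ∃ b ∈ Ablock k, a < b ∧ b < n ∧ 2 * b = a + n := by
  have hpow : 2 ^ (nSeq k + 1) = 2 * 2 ^ nSeq k := pow_succ' 2 _
  have hlong := add_three_le_two_pow_succ (nSeq_strictMono.monotone k.zero_le : nSeq 0 ≤ nSeq k)
  rw [nSeq_succ] at hn'
  by_cases hshort : n ≤ nSeq k + 2 ^ (nSeq k + 1)
  · obtain ⟨a, b, ha, hab, hbn, hsum⟩ := exists_ap_near (nSeq k) n hn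
    exact ⟨a, mem_Ablock_of_le ha (by omega), b, mem_Ablock_of_le (by omega) (by omega),
      hab, hbn, hsum⟩
  · rw [hpow] at hlong hshort hn'
    obtain ⟨a, j, ha₁, ha₂, hj₁, hj₂, hab, hbn, hsum⟩ :=
      exists_ap_mul (m := nSeq k) (d := 2 ^ nSeq k) (by omega) (by omega) hn'
    exact ⟨a, mem_Ablock_of_le ha₁ (by omega), j * 2 ^ nSeq k,
      mul_two_pow_mem_Ablock hj₁ (by omega), hab, hbn, hsum⟩

theorem stmt_2 :
    ∀ n : ℕ, 4 ≤ n →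
      ∃ a ∈ ⋃ k, Ablock k, ∃ b ∈ ⋃ k, Ablock k, a < b ∧ b < n ∧ 2 * b = a + n := by
  intro n hn
  obtain ⟨k, hk, hk'⟩ := nSeq_strictMono.exists_between_of_tendsto_atTop
    nSeq_strictMono.tendsto_atTop (x := n - 2) (by simp only [nSeq]; omega)
  obtain ⟨a, ha, b, hb, h⟩ := exists_ap_Ablock (k := k) (n := n) (by omega) (by omega)
  exact ⟨a, Set.mem_iUnion_of_mem k ha, b, Set.mem_iUnion_of_mem k hb, h⟩
end

section
/- There exists an AP₃-covering sequence A ⊆ ℕ such that liminf_{n→∞} A(n)/√n ≤ 2. -/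
/-- Counting function: number of elements of `A` that are at most `n`. -/
noncomputable def countUpTo (A : Set ℕ) (n : ℕ) : ℕ := (A ∩ Set.Iic n).ncard

/-- `A` is an AP₃-covering sequence. -/
def AP3Covering (A : Set ℕ) : Prop :=
  ∃ n₀ : ℕ, ∀ n > n₀, ∃ a ∈ A, ∃ b ∈ A, a < b ∧ b < n ∧ 2 * b = a + n

/-!
The set is a union of blocks at the doubly exponential scales `h_0 = 2`, `h_{k+1} = 2 h_k²`. The
block at scale `h` is the interval `(2h, 4h]` together with the `2h` multiples `3h, …, (2h+2)h`
of `h`; it supplies a progression `a < b < n` for every `n` in `[2h + 3, 4h²]`, with `a` in the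
interval. At `N = 4 h_{k+1}²` the top block contributes `4 h_{k+1} = 2√N` elements, and everything
below it only `O(h_k) = O(N^{1/4})`.
-/

open Filter Topology

theorem Filter.liminf_le_of_le_of_tendsto_comp {α ι β : Type*}
    [ConditionallyCompleteLinearOrder β] [TopologicalSpace β] [OrderTopology β] [DenselyOrdered β]
    {l : Filter α} {l' : Filter ι} [l'.NeBot] {u : α → β} {φ : ι → α} {v : ι → β} {L : β}
    (hu : IsBoundedUnder (· ≥ ·) l u) (hφ : Tendsto φ l' l) (hv : Tendsto v l' (𝓝 L))
    (huv : ∀ i, u (φ i) ≤ v i) : liminf u l ≤ L :=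
  le_of_forall_gt_imp_ge_of_dense fun _c hc => liminf_le_of_frequently_le
    (hφ.frequently ((hv.eventually (eventually_lt_nhds hc)).mono
      fun i hi => (huv i).trans hi.le).frequently) hu

theorem exists_mem_Ico_of_chain (lo hi : ℕ → ℕ) (hchain : ∀ k, lo (k + 1) ≤ hi k) {n m : ℕ}
    (h0 : lo 0 ≤ n) (hm : n < lo m) : ∃ k, n ∈ Set.Ico (lo k) (hi k) := by
  induction m with
  | zero => omega
  | succ m ih =>
    by_cases hnm : n < lo m
    · exact ih hnm
    · exact ⟨m, by omega, hm.trans_le (hchain m)⟩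

def IsAP3Completion (A : Set ℕ) (n : ℕ) : Prop :=
  ∃ a ∈ A, ∃ b ∈ A, a < b ∧ b < n ∧ 2 * b = a + n

theorem IsAP3Completion.mono {A B : Set ℕ} {n : ℕ} (hAB : A ⊆ B) (h : IsAP3Completion A n) :
    IsAP3Completion B n :=
  let ⟨a, ha, b, hb, hab⟩ := h
  ⟨a, hAB ha, b, hAB hb, hab⟩

namespace AP3Covering

def block (h : ℕ) : Finset ℕ :=
  Finset.Ioc (2 * h) (4 * h) ∪ (Finset.Ioc 2 (2 * h + 2)).image (h * ·)

theorem card_block_le (h : ℕ) : (block h).card ≤ 4 * h :=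
  calc (block h).card ≤ (Finset.Ioc (2 * h) (4 * h)).card + (Finset.Ioc 2 (2 * h + 2)).card := by
        grw [block, Finset.card_union_le, Finset.card_image_le]
    _ = 4 * h := by simp only [Nat.card_Ioc]; omega

theorem block_subset {h : ℕ} (hh : 1 ≤ h) : block h ⊆ Finset.Ioc (2 * h) (4 * h ^ 2) := by
  intro x hx
  rcases Finset.mem_union.1 hx with hx | hx
  · rw [Finset.mem_Ioc] at hx ⊢
    constructor <;> nlinarith
  · obtain ⟨j, hj, rfl⟩ := Finset.mem_image.1 hx
    rw [Finset.mem_Ioc] at hj ⊢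
    constructor <;> nlinarith

/-- Up to `4h`, take consecutive terms of the interval. Beyond, `2b` runs through the multiples
of `2h`, so one of them lands in `n + (2h, 4h]`, and then `a = 2b - n` is in the interval. -/
theorem isAP3Completion_block {h n : ℕ} (hlo : 2 * h + 3 ≤ n) (hhi : n < 2 * h * (2 * h + 1)) :
    IsAP3Completion (block h) n := by
  rcases le_or_gt n (4 * h) with hn | hn
  · exact ⟨n - 2, Finset.mem_union_left _ (Finset.mem_Ioc.2 ⟨by omega, by omega⟩),
      n - 1, Finset.mem_union_left _ (Finset.mem_Ioc.2 ⟨by omega, by omega⟩),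
      by omega, by omega, by omega⟩
  · have hh : 0 < h := Nat.pos_of_ne_zero fun h0 => by simp [h0] at hhi
    have hdiv : 2 * (h * (n / (2 * h))) + n % (2 * h) = n := by
      rw [← mul_assoc]; exact Nat.div_add_mod n (2 * h)
    have hmod : n % (2 * h) < 2 * h := Nat.mod_lt _ (by omega)
    have hq₁ : 0 < n / (2 * h) := Nat.div_pos (by omega) (by omega)
    have hq₂ : n / (2 * h) < 2 * h + 1 :=
      (Nat.div_lt_iff_lt_mul (by omega)).2 (by rwa [mul_comm])
    have hb : h * (n / (2 * h) + 2) = h * (n / (2 * h)) + 2 * h := by ring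
    refine ⟨4 * h - n % (2 * h), Finset.mem_union_left _ (Finset.mem_Ioc.2 ⟨by omega, by omega⟩),
      h * (n / (2 * h) + 2), Finset.mem_union_right _ (Finset.mem_image.2
        ⟨n / (2 * h) + 2, Finset.mem_Ioc.2 ⟨by omega, by omega⟩, rfl⟩),
      by omega, by omega, by omega⟩

def scale : ℕ → ℕ
  | 0 => 2
  | k + 1 => 2 * scale k ^ 2

theorem two_le_scale (k : ℕ) : 2 ≤ scale k := by
  induction k with
  | zero => exact le_rfl
  | succ k ih => simp only [scale]; nlinarith

theorem strictMono_scale : StrictMono scale :=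
  strictMono_nat_of_lt_succ fun k => by
    have := two_le_scale k
    simp only [scale]; nlinarith

theorem two_mul_scale_succ (k : ℕ) : 2 * scale (k + 1) = 4 * scale k ^ 2 := by
  simp only [scale]; ring

def coveringSet : Set ℕ := ⋃ k, (block (scale k) : Set ℕ)

/-- Since `2 h_{k+1} = (2 h_k)²`, the ranges `[2h_k + 3, 2h_k (2h_k + 1))` served by successive
blocks overlap. -/
theorem ap3Covering_coveringSet : AP3Covering coveringSet := by
  refine ⟨6, fun n hn => ?_⟩
  obtain ⟨k, hlo, hhi⟩ := exists_mem_Ico_of_chain (fun k => 2 * scale k + 3)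
    (fun k => 2 * scale k * (2 * scale k + 1))
    (fun k => by have := two_le_scale k; rw [two_mul_scale_succ]; nlinarith)
    (n := n) (m := n) (by simp only [scale]; omega)
    (by have : n ≤ scale n := strictMono_scale.id_le n; omega)
  exact (isAP3Completion_block hlo hhi).mono
    (Set.subset_iUnion (fun k => (block (scale k) : Set ℕ)) k)

/-- Each block at scale `h_j` lies in `(2h_j, 2h_{j+1}]`, so below `2h_{k+2}` everything outside
the two top blocks is at most `2h_k`. -/
theorem countUpTo_coveringSet_le (k : ℕ) :
    countUpTo coveringSet (2 * scale (k + 2)) ≤ 4 * scale (k + 1) + 8 * scale k := by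
  have hsub : coveringSet ∩ Set.Iic (2 * scale (k + 2)) ⊆
      ↑(block (scale (k + 1)) ∪ block (scale k) ∪ Finset.Iic (2 * scale k)) := by
    rintro x ⟨hx, hxN⟩
    obtain ⟨j, hxj⟩ := Set.mem_iUnion.1 hx
    have hxI := Finset.mem_Ioc.1 (block_subset (by linarith [two_le_scale j]) hxj)
    have hjk : j < k + 2 := strictMono_scale.lt_iff_lt.1 (by have := Set.mem_Iic.1 hxN; omega)
    simp only [Finset.coe_union, Set.mem_union, Finset.mem_coe, Finset.mem_Iic]
    obtain rfl | rfl | hj : j = k + 1 ∨ j = k ∨ j + 1 ≤ k := by omega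
    · exact Or.inl (Or.inl hxj)
    · exact Or.inl (Or.inr hxj)
    · have := strictMono_scale.monotone hj
      have := two_mul_scale_succ j
      omega
  calc countUpTo coveringSet (2 * scale (k + 2))
      ≤ (block (scale (k + 1)) ∪ block (scale k) ∪ Finset.Iic (2 * scale k)).card := by
        rw [countUpTo, ← Set.ncard_coe_finset]
        exact Set.ncard_le_ncard hsub (Finset.finite_toSet _)
    _ ≤ (block (scale (k + 1))).card + (block (scale k)).card + (2 * scale k + 1) := by
        grw [Finset.card_union_le, Finset.card_union_le, Nat.card_Iic]
    _ ≤ 4 * scale (k + 1) + 8 * scale k := by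
        have := card_block_le (scale (k + 1))
        have := card_block_le (scale k)
        have := two_le_scale k
        omega

theorem countUpTo_coveringSet_div_sqrt_le (k : ℕ) :
    (countUpTo coveringSet (2 * scale (k + 2)) : ℝ) / √(2 * scale (k + 2) : ℕ) ≤
      2 + 2 / scale k := by
  have hpos : (0 : ℝ) < scale k := by exact_mod_cast (two_le_scale k).trans_lt' two_pos
  have hsqrt : √(2 * scale (k + 2) : ℕ) = 4 * (scale k : ℝ) ^ 2 := by
    rw [two_mul_scale_succ, show scale (k + 1) = 2 * scale k ^ 2 from rfl]
    push_cast
    rw [show (4 : ℝ) * (2 * scale k ^ 2) ^ 2 = (4 * scale k ^ 2) ^ 2 by ring,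
      Real.sqrt_sq (by positivity)]
  have hcount : countUpTo coveringSet (2 * scale (k + 2)) ≤ 8 * scale k ^ 2 + 8 * scale k := by
    have := countUpTo_coveringSet_le k
    rw [show scale (k + 1) = 2 * scale k ^ 2 from rfl] at this
    omega
  rw [hsqrt, div_le_iff₀ (by positivity)]
  calc _ ≤ (8 * scale k ^ 2 + 8 * scale k : ℝ) := by exact_mod_cast hcount
    _ = (2 + 2 / scale k) * (4 * scale k ^ 2) := by field_simp; ring

end AP3Covering

theorem stmt_4 :
    ∃ A : Set ℕ, AP3Covering A ∧
      Filter.liminf (fun n : ℕ => (countUpTo A n : ℝ) / Real.sqrt n) Filter.atTop ≤ 2 := by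
  open AP3Covering in
  refine ⟨coveringSet, ap3Covering_coveringSet, ?_⟩
  apply liminf_le_of_le_of_tendsto_comp (l' := atTop) (φ := fun k => 2 * scale (k + 2))
    (v := fun k => 2 + 2 / (scale k : ℝ)) (isBoundedUnder_of ⟨0, fun n => by positivity⟩)
  · exact StrictMono.tendsto_atTop fun a b hab => by
      have := strictMono_scale (show a + 2 < b + 2 by omega); omega
  · simpa using tendsto_const_nhds.add
      ((tendsto_const_div_atTop_nhds_zero_nat (2 : ℝ)).comp strictMono_scale.tendsto_atTop)
  · exact countUpTo_coveringSet_div_sqrt_le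
end

section
/- Let B_k = { Σ_{i=0}^{k-1} ε_i 4^i : ε_i ∈ {1,2} }. Then for all positive integers k and n with 3·4^{k-1} ≤ n < 4^k, there exist a, b ∈ B_k with a < b < n such that 2b = a + n. -/
/-!
Write `n = ∑ dᵢ 4^i` in base 4. Each digit `dᵢ ∈ {0,1,2,3}` is `2βᵢ - αᵢ` with `αᵢ, βᵢ ∈ {1,2}`
(take `αᵢ ≡ dᵢ mod 2`), so digitwise `2b = a + n` with `a, b ∈ B_k`. Every element of `B_k` is at
most `2(4^k - 1)/3 < 3·4^(k-1) ≤ n`, so `b < n`, and then `a = 2b - n < b`.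
-/

/-- B_k: integers whose k-digit base-4 expansion uses only digits 1 and 2. -/
def Bset (k : ℕ) : Set ℕ :=
  {m | ∃ ε : ℕ → ℕ, (∀ i < k, ε i = 1 ∨ ε i = 2) ∧
        m = ∑ i ∈ Finset.range k, ε i * 4 ^ i}

open Finset

theorem Nat.mod_pow_eq_sum_range_digit_mul_pow (b n k : ℕ) :
    n % b ^ k = ∑ i ∈ range k, n / b ^ i % b * b ^ i := by
  induction k with
  | zero => simp [Nat.mod_one]
  | succ k ih => rw [sum_range_succ, ← ih, pow_succ, Nat.mod_mul, Nat.mul_comm]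

theorem three_mul_add_two_le_of_mem_Bset {k m : ℕ} (hm : m ∈ Bset k) : 3 * m + 2 ≤ 2 * 4 ^ k := by
  obtain ⟨ε, hε, rfl⟩ := hm
  have hle : ∑ i ∈ range k, ε i * 4 ^ i ≤ 2 * ∑ i ∈ range k, 4 ^ i := by
    rw [mul_sum]
    refine sum_le_sum fun i hi => Nat.mul_le_mul_right _ ?_
    rcases hε i (mem_range.1 hi) with h | h <;> omega
  have hgeom : (∑ i ∈ range k, 4 ^ i) * 3 + 1 = 4 ^ k := geom_sum_mul_add 3 k
  omega

theorem exists_mem_Bset_two_mul_eq_add {k n : ℕ} (hn : n < 4 ^ k) :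
    ∃ a ∈ Bset k, ∃ b ∈ Bset k, 2 * b = a + n := by
  set d : ℕ → ℕ := fun i => n / 4 ^ i % 4
  have hd : ∀ i, d i < 4 := fun i => Nat.mod_lt _ (by norm_num)
  have hn_sum : n = ∑ i ∈ range k, d i * 4 ^ i := by
    rw [← Nat.mod_pow_eq_sum_range_digit_mul_pow, Nat.mod_eq_of_lt hn]
  refine ⟨∑ i ∈ range k, (2 - d i % 2) * 4 ^ i, ⟨_, fun i _ => by omega, rfl⟩,
    ∑ i ∈ range k, (d i / 2 + 1) * 4 ^ i, ⟨_, fun i _ => by have := hd i; omega, rfl⟩, ?_⟩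
  rw [hn_sum, mul_sum, ← sum_add_distrib]
  refine sum_congr rfl fun i _ => ?_
  rw [← mul_assoc, ← add_mul]
  congr 1
  omega

theorem stmt_5_general (k n : ℕ) (h1 : 3 * 4 ^ (k - 1) ≤ n) (h2 : n < 4 ^ k) :
    ∃ a ∈ Bset k, ∃ b ∈ Bset k, a < b ∧ b < n ∧ 2 * b = a + n := by
  obtain ⟨a, ha, b, hb, hab⟩ := exists_mem_Bset_two_mul_eq_add h2
  have hb_le := three_mul_add_two_le_of_mem_Bset hb
  have hpow : 4 ^ k ≤ 4 * 4 ^ (k - 1) := by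
    rw [← pow_succ']
    exact Nat.pow_le_pow_right (by norm_num) (by omega)
  have hbn : b < n := by omega
  exact ⟨a, ha, b, hb, by omega, hbn, hab⟩

theorem stmt_5 (k n : ℕ) (hk : 1 ≤ k) (h1 : 3 * 4 ^ (k - 1) ≤ n) (h2 : n < 4 ^ k) :
    ∃ a ∈ Bset k, ∃ b ∈ Bset k, a < b ∧ b < n ∧ 2 * b = a + n :=
  stmt_5_general k n h1 h2
end

section
/- Let B_k = { Σ_{i=0}^{k-1} ε_i 4^i : ε_i ∈ {1,2} } and A = ⋃_{k≥1} ⋃_{i=0}^{8} (i·4^{k-1} + B_k). Then for all n ≥ 1, A(n) = |{a ∈ A : a ≤ n}| < 34·√n. -/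
/-- A = ⋃_{k ≥ 1} ⋃_{0 ≤ i ≤ 8} (i·4^{k-1} + B_k). -/
def Aset : Set ℕ :=
  {m | ∃ k : ℕ, 1 ≤ k ∧ ∃ i : ℕ, i ≤ 8 ∧ ∃ b ∈ Bset k, m = i * 4 ^ (k - 1) + b}

open Finset

def bFinset (m : ℕ) : Finset ℕ :=
  (univ : Finset (Fin m → Fin 2)).image fun ε =>
    ∑ i : Fin m, ((ε i : ℕ) + 1) * 4 ^ (i : ℕ)

lemma card_bFinset_le (m : ℕ) : #(bFinset m) ≤ 2 ^ m :=
  card_image_le.trans (by simp)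

lemma Bset_subset_bFinset (m : ℕ) : Bset m ⊆ bFinset m := by
  rintro _ ⟨ε, hε, rfl⟩
  refine mem_image.2 ⟨fun i => ⟨ε i - 1, ?_⟩, mem_univ _, ?_⟩
  · rcases hε i i.2 with h | h <;> simp [h]
  · rw [Fin.sum_univ_eq_sum_range (fun j => (ε j - 1 + 1) * 4 ^ j) m]
    refine sum_congr rfl fun i hi => ?_
    rcases hε i (mem_range.1 hi) with h | h <;> simp [h]

lemma Bset_succ {m b : ℕ} (hb : b ∈ Bset (m + 1)) :
    ∃ e, (e = 1 ∨ e = 2) ∧ ∃ b' ∈ Bset m, b = e * 4 ^ m + b' := by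
  obtain ⟨ε, hε, rfl⟩ := hb
  refine ⟨ε m, hε m m.lt_succ_self, _, ⟨ε, fun i hi => hε i (by omega), rfl⟩, ?_⟩
  rw [sum_range_succ, add_comm]

lemma exists_eq_mul_pow_add_of_mem_Aset {a : ℕ} (ha : a ∈ Aset) :
    ∃ m, ∃ j ∈ Icc 1 10, ∃ b ∈ Bset m, a = j * 4 ^ m + b := by
  obtain ⟨k, hk, i, hi, b, hb, rfl⟩ := ha
  obtain ⟨m, rfl⟩ : ∃ m, k = m + 1 := ⟨k - 1, by omega⟩
  obtain ⟨e, he, b', hb', rfl⟩ := Bset_succ hb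
  exact ⟨m, i + e, mem_Icc.2 (by omega), b', hb', by simp only [add_tsub_cancel_right]; ring⟩

def coverFinset (L : ℕ) : Finset ℕ :=
  (range (L + 1)).biUnion fun m => (Icc 1 10).biUnion fun j => (bFinset m).image (j * 4 ^ m + ·)

lemma card_coverFinset_lt (L : ℕ) : #(coverFinset L) < 20 * 2 ^ L := by
  calc #(coverFinset L)
      ≤ ∑ m ∈ range (L + 1), ∑ _j ∈ Icc 1 10, 2 ^ m := by
        refine card_biUnion_le.trans (sum_le_sum fun m _ => card_biUnion_le.trans ?_)
        exact sum_le_sum fun j _ => card_image_le.trans (card_bFinset_le m)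
    _ = 10 * ∑ m ∈ range (L + 1), 2 ^ m := by simp [mul_sum]
    _ < 10 * 2 ^ (L + 1) := by
        gcongr; exact Nat.geomSum_lt le_rfl fun m hm => mem_range.1 hm
    _ = 20 * 2 ^ L := by ring

lemma Aset_inter_Iic_subset_coverFinset (n : ℕ) :
    Aset ∩ Set.Iic n ⊆ coverFinset (Nat.log 4 n) := by
  rintro a ⟨ha, han : a ≤ n⟩
  obtain ⟨m, j, hj, b, hb, rfl⟩ := exists_eq_mul_pow_add_of_mem_Aset ha
  have hpow : 4 ^ m ≤ n :=
    (Nat.le_mul_of_pos_left _ (mem_Icc.1 hj).1).trans (le_of_add_le_left han)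
  have hm : m ∈ range (Nat.log 4 n + 1) :=
    mem_range.2 (Nat.lt_succ_of_le (Nat.le_log_of_pow_le (by norm_num) hpow))
  exact mem_biUnion.2
    ⟨m, hm, mem_biUnion.2 ⟨j, hj, mem_image.2 ⟨b, Bset_subset_bFinset m hb, rfl⟩⟩⟩

lemma two_pow_log_four_le_sqrt {n : ℕ} (hn : n ≠ 0) :
    (2 : ℝ) ^ Nat.log 4 n ≤ Real.sqrt n := by
  rw [Real.le_sqrt (by positivity) (by positivity), ← pow_mul, pow_mul',
    show (2 : ℝ) ^ 2 = 4 by norm_num]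
  exact_mod_cast Nat.pow_log_le_self 4 hn

theorem stmt_7 :
    ∀ n : ℕ, 1 ≤ n → (countUpTo Aset n : ℝ) < 34 * Real.sqrt n := by
  intro n hn
  have hcount : countUpTo Aset n < 20 * 2 ^ Nat.log 4 n :=
    ((Set.ncard_le_ncard (Aset_inter_Iic_subset_coverFinset n) (finite_toSet _)).trans
      (Set.ncard_coe_finset _).le).trans_lt (card_coverFinset_lt _)
  calc (countUpTo Aset n : ℝ) < 20 * 2 ^ Nat.log 4 n := by exact_mod_cast hcount
    _ ≤ 20 * Real.sqrt n := by gcongr; exact two_pow_log_four_le_sqrt (by omega)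
    _ ≤ 34 * Real.sqrt n := by gcongr; norm_num
end

section
/- Let k ≥ 3 and n be a positive integer. For u, v with n/(2k) ≤ u < v ≤ n/(2(k−1)), the sets Y_{n,u} = {n − i·u : 1 ≤ i ≤ k−1} and Y_{n,v} = {n − i·v : 1 ≤ i ≤ k−1} are disjoint. -/
/-!
A common element gives `i * u = j * v` with `1 ≤ j < i ≤ k - 1`. The window for `u` and `v`
forces `(k - 1) * v ≤ k * u`, so `(j + 1) * (k - 1) * v ≤ (j + 1) * k * u ≤ k * i * u = k * j * v`,
i.e. `k - 1 ≤ j`, contradicting `j < i ≤ k - 1`.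
-/

theorem mul_ne_mul_of_sub_one_mul_le_mul {k u v i j : ℕ} (huv : u < v)
    (hratio : (k - 1) * v ≤ k * u) (hj : 1 ≤ j) (hi : i ≤ k - 1) : i * u ≠ j * v := by
  intro heq
  have hji : j < i := by
    by_contra! hij
    have : j * u < j * v := Nat.mul_lt_mul_of_pos_left huv hj
    have : i * u ≤ j * u := Nat.mul_le_mul_right u hij
    omega
  have hstep : (j + 1) * u ≤ j * v := heq ▸ Nat.mul_le_mul_right u hji
  have hchain : (j + 1) * (k - 1) * v ≤ j * k * v :=
    calc (j + 1) * (k - 1) * v = (j + 1) * ((k - 1) * v) := by ring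
      _ ≤ (j + 1) * (k * u) := Nat.mul_le_mul_left _ hratio
      _ = k * ((j + 1) * u) := by ring
      _ ≤ k * (j * v) := Nat.mul_le_mul_left _ hstep
      _ = j * k * v := by ring
  have hcoef : (j + 1) * (k - 1) ≤ j * k := Nat.le_of_mul_le_mul_right hchain (by omega)
  obtain ⟨m, rfl⟩ : ∃ m, k = m + 1 := ⟨k - 1, by omega⟩
  simp only [Nat.add_sub_cancel] at hcoef hi
  nlinarith

theorem sub_one_mul_le_mul_of_mem_window {k n u v : ℕ}
    (hu : (n : ℝ) / (2 * k) ≤ u) (hv : (v : ℝ) ≤ n / (2 * ((k : ℝ) - 1))) :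
    (k - 1) * v ≤ k * u := by
  rcases le_or_gt k 1 with hk | hk
  · simp [Nat.sub_eq_zero_of_le hk]
  have hk' : (1 : ℝ) < k := by exact_mod_cast hk
  have hu' : (n : ℝ) ≤ 2 * k * u := (div_le_iff₀' (by positivity)).mp hu
  have hv' : 2 * ((k : ℝ) - 1) * v ≤ n := (le_div_iff₀' (by linarith)).mp hv
  have : ((k : ℝ) - 1) * v ≤ k * u := by linarith
  exact_mod_cast (show (((k - 1 : ℕ) : ℝ)) * v ≤ k * u by push_cast [hk.le]; exact this)

theorem stmt_9_general (k n u v : ℕ)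
    (hu : (n : ℝ) / (2 * k) ≤ u) (huv : u < v)
    (hv : (v : ℝ) ≤ n / (2 * ((k : ℝ) - 1))) :
    Disjoint {m : ℤ | ∃ i : ℕ, 1 ≤ i ∧ i ≤ k - 1 ∧ m = (n : ℤ) - i * u}
             {m : ℤ | ∃ i : ℕ, 1 ≤ i ∧ i ≤ k - 1 ∧ m = (n : ℤ) - i * v} := by
  rw [Set.disjoint_left]
  rintro _ ⟨i, -, hik, rfl⟩ ⟨j, hj, -, he⟩
  refine mul_ne_mul_of_sub_one_mul_le_mul huv (sub_one_mul_le_mul_of_mem_window hu hv) hj hik ?_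
  exact_mod_cast (by linarith : (i : ℤ) * u = j * v)

theorem stmt_9 (k n u v : ℕ) (hk : 3 ≤ k) (hn : 1 ≤ n)
    (hu : (n : ℝ) / (2 * k) ≤ u) (huv : u < v)
    (hv : (v : ℝ) ≤ n / (2 * ((k : ℝ) - 1))) :
    Disjoint {m : ℤ | ∃ i : ℕ, 1 ≤ i ∧ i ≤ k - 1 ∧ m = (n : ℤ) - i * u}
             {m : ℤ | ∃ i : ℕ, 1 ≤ i ∧ i ≤ k - 1 ∧ m = (n : ℤ) - i * v} :=
  stmt_9_general k n u v hu huv hv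
end

section
/- Let a₀ ≥ 3 and k ≥ 4 be integers. Define b₀ = ⌊k·a₀/2⌋, and for l ≥ 1, a_l = k·b_{l−1} − a₀ + 1 and b_l = ⌊k·a_l/2⌋. Let A = ⋃_{l≥0} [a_l, b_l] ∩ ℕ. Then for every l ≥ 0 and every n ∈ [a_l, b_l], there do not exist a, b ∈ A with a < n, b < n and n = k·a − b. -/
/-!
Since `k ≥ 4`, every block satisfies `b_l ≥ 2 a_l`, and the blocks are increasing and separated
(`b_l < a_{l+1}`). Let `n ∈ [a_l, b_l]` and `x, y ∈ A` with `y < n`. If `x` lies in a block of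
index `≥ l`, then `k x ≥ k a_l ≥ 2 b_l ≥ 2 n > n + y`. Otherwise `x ≤ b_{l-1}`, so
`k x ≤ k b_{l-1} = a_l + a_0 - 1 < n + y` because every element of `A` is at least `a_0`.
-/

structure IsBlockSequence (k : ℕ) (a b : ℕ → ℕ) : Prop where
  four_le : 4 ≤ k
  b_eq : ∀ l, b l = k * a l / 2
  a_succ : ∀ l, a (l + 1) = k * b l - a 0 + 1

namespace IsBlockSequence

variable {k : ℕ} {a b : ℕ → ℕ}

theorem four_mul_le (h : IsBlockSequence k a b) (m : ℕ) : 4 * m ≤ k * m :=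
  Nat.mul_le_mul_right m h.four_le

theorem two_mul_b_le (h : IsBlockSequence k a b) (l : ℕ) : 2 * b l ≤ k * a l := by
  rw [h.b_eq l, mul_comm]
  exact Nat.div_mul_le_self _ 2

theorem two_mul_a_le_b (h : IsBlockSequence k a b) (l : ℕ) : 2 * a l ≤ b l := by
  rw [h.b_eq l, Nat.le_div_iff_mul_le two_pos]
  linarith [h.four_mul_le (a l)]

theorem a_zero_le (h : IsBlockSequence k a b) (l : ℕ) : a 0 ≤ a l := by
  induction l with
  | zero => rfl
  | succ m ih =>
    have := h.two_mul_a_le_b m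
    have := h.four_mul_le (b m)
    rw [h.a_succ m]
    omega

theorem b_lt_a_succ (h : IsBlockSequence k a b) (l : ℕ) : b l < a (l + 1) := by
  have := h.two_mul_a_le_b l
  have := h.four_mul_le (b l)
  have := h.a_zero_le l
  rw [h.a_succ l]
  omega

theorem a_monotone (h : IsBlockSequence k a b) : Monotone a :=
  monotone_nat_of_le_succ fun l => by
    have := h.b_lt_a_succ l
    have := h.two_mul_a_le_b l
    omega

theorem b_monotone (h : IsBlockSequence k a b) : Monotone b :=
  monotone_nat_of_le_succ fun l => by
    have := h.b_lt_a_succ l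
    have := h.two_mul_a_le_b (l + 1)
    omega

theorem add_lt_mul_of_a_le (h : IsBlockSequence k a b) {l n x y : ℕ} (hx : a l ≤ x)
    (hn : n ≤ b l) (hy : y < n) : n + y < k * x :=
  calc n + y < 2 * b l := by omega
    _ ≤ k * a l := h.two_mul_b_le l
    _ ≤ k * x := Nat.mul_le_mul_left k hx

theorem mul_lt_add_of_le_b (h : IsBlockSequence k a b) {m n x y : ℕ} (hx : x ≤ b m)
    (hn : a (m + 1) ≤ n) (hy : a 0 ≤ y) : k * x < n + y := by
  have hkx : k * x ≤ k * b m := Nat.mul_le_mul_left k hx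
  have := h.a_succ m
  have := h.two_mul_a_le_b m
  have := h.four_mul_le (b m)
  have := h.a_zero_le m
  omega

theorem add_ne_mul (h : IsBlockSequence k a b) {l j n x y : ℕ} (hn : a l ≤ n ∧ n ≤ b l)
    (hx : a j ≤ x ∧ x ≤ b j) (hy : a 0 ≤ y) (hyn : y < n) : n + y ≠ k * x := by
  rcases le_or_gt l j with hlj | hjl
  · exact (h.add_lt_mul_of_a_le ((h.a_monotone hlj).trans hx.1) hn.2 hyn).ne
  · obtain ⟨m, rfl⟩ : ∃ m, l = m + 1 := ⟨l - 1, by omega⟩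
    exact (h.mul_lt_add_of_le_b (hx.2.trans (h.b_monotone (Nat.le_of_lt_succ hjl))) hn.1 hy).ne'

end IsBlockSequence

theorem stmt_10_general (k : ℕ) (a b : ℕ → ℕ) (hk : 4 ≤ k)
    (hb : ∀ l, b l = k * a l / 2)
    (ha : ∀ l, a (l + 1) = k * b l - a 0 + 1) :
    ∀ l n, a l ≤ n → n ≤ b l →
      ¬ ∃ x ∈ {m : ℕ | ∃ j, a j ≤ m ∧ m ≤ b j},
          ∃ y ∈ {m : ℕ | ∃ j, a j ≤ m ∧ m ≤ b j},
            x < n ∧ y < n ∧ n + y = k * x := by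
  have h : IsBlockSequence k a b := ⟨hk, hb, ha⟩
  rintro l n hal hnb ⟨x, ⟨j, hx⟩, y, ⟨i, hyi, -⟩, -, hyn, hnyx⟩
  exact h.add_ne_mul ⟨hal, hnb⟩ hx ((h.a_zero_le i).trans hyi) hyn hnyx

theorem stmt_10 (k : ℕ) (a b : ℕ → ℕ) (hk : 4 ≤ k) (ha0 : 3 ≤ a 0)
    (hb : ∀ l, b l = k * a l / 2)
    (ha : ∀ l, a (l + 1) = k * b l - a 0 + 1) :
    ∀ l n, a l ≤ n → n ≤ b l →
      ¬ ∃ x ∈ {m : ℕ | ∃ j, a j ≤ m ∧ m ≤ b j},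
          ∃ y ∈ {m : ℕ | ∃ j, a j ≤ m ∧ m ≤ b j},
            x < n ∧ y < n ∧ n + y = k * x :=
  stmt_10_general k a b hk hb ha
end

section
/- Let a₀ ≥ 3 and k ≥ 4 be integers, with b₀ = ⌊k·a₀/2⌋, a_l = k·b_{l−1} − a₀ + 1, b_l = ⌊k·a_l/2⌋ for l ≥ 1, and A = ⋃_{l≥0} [a_l, b_l] ∩ ℕ. Then for every l ≥ 0 and every integer n with b_l + 1 ≤ n ≤ a_{l+1} − 1, there exist a, b ∈ A with a < n and b < n such that n = k·a − b. -/
/-!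
The gap after `[a_l, b_l]` is covered by the numbers `k x - y` with `x ∈ [a_l, b_l]` and `y`
ranging either over `[a_0, b_0]` or over `[a_l, b_l]`. Both intervals have at least `k` elements,
so as `x` runs through consecutive integers the ranges `[k x - q, k x - p]` of `k x - y` overlap,
and each choice of `y`-interval covers a whole interval of `n`; the two together reach from below
`b_l + 1` up to `k b_l - a_0 = a_{l+1} - 1`.
-/

open Set

theorem Nat.exists_mem_Icc_add_eq_mul {k p q c d n : ℕ} (hk : 0 < k) (hcd : c ≤ d)
    (hpq : p + k ≤ q + 1) (hlo : k * c ≤ n + q) (hhi : n + p ≤ k * d) :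
    ∃ x ∈ Icc c d, ∃ y ∈ Icc p q, n + y = k * x := by
  set x := min d ((n + q) / k) with hx
  have hxq : k * x ≤ n + q := (Nat.mul_le_mul_left k (min_le_right _ _)).trans (Nat.mul_div_le _ _)
  have hxp : n + p ≤ k * x := by
    rcases min_choice d ((n + q) / k) with h | h <;> rw [hx, h]
    · exact hhi
    · have := Nat.div_add_mod (n + q) k
      have := Nat.mod_lt (n + q) hk
      omega
  have hcx : c ≤ x := le_min hcd ((Nat.le_div_iff_mul_le hk).2 (by rwa [mul_comm]))
  exact ⟨x, ⟨hcx, min_le_left _ _⟩, k * x - n, ⟨by omega, by omega⟩, by omega⟩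

theorem Nat.two_mul_le_mul_div_two {k a : ℕ} (hk : 4 ≤ k) : 2 * a ≤ k * a / 2 :=
  (Nat.le_div_iff_mul_le two_pos).2 (by nlinarith)

theorem Nat.add_le_mul_div_two_add_one {k a : ℕ} (hk : 4 ≤ k) (ha : 3 ≤ a) :
    a + k ≤ k * a / 2 + 1 := by
  have : 2 * (a + k - 1) ≤ k * a := by
    obtain ⟨k, rfl⟩ := Nat.exists_eq_add_of_le hk
    obtain ⟨a, rfl⟩ := Nat.exists_eq_add_of_le ha
    rw [show 3 + a + (4 + k) - 1 = a + k + 6 by omega]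
    nlinarith
  omega

theorem apply_zero_le_of_recurrence {k : ℕ} {a b : ℕ → ℕ} (hk : 4 ≤ k)
    (hb : ∀ l, b l = k * a l / 2) (ha : ∀ l, a (l + 1) = k * b l - a 0 + 1) (l : ℕ) :
    a 0 ≤ a l := by
  induction l with
  | zero => rfl
  | succ l ih =>
    have h2 : 2 * a l ≤ b l := hb l ▸ Nat.two_mul_le_mul_div_two hk
    have hkb : b l ≤ k * b l := Nat.le_mul_of_pos_left _ (by omega)
    rw [ha]
    omega

theorem stmt_11 (k : ℕ) (a b : ℕ → ℕ) (hk : 4 ≤ k) (ha0 : 3 ≤ a 0)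
    (hb : ∀ l, b l = k * a l / 2)
    (ha : ∀ l, a (l + 1) = k * b l - a 0 + 1) :
    ∀ l n, b l + 1 ≤ n → n ≤ a (l + 1) - 1 →
      ∃ x ∈ {m : ℕ | ∃ j, a j ≤ m ∧ m ≤ b j},
        ∃ y ∈ {m : ℕ | ∃ j, a j ≤ m ∧ m ≤ b j},
          x < n ∧ y < n ∧ n + y = k * x := by
  intro l n hn_lo hn_hi
  have h0l := apply_zero_le_of_recurrence hk hb ha l
  have hspan : ∀ j, 3 ≤ a j → a j + k ≤ b j + 1 := fun j h ↦
    hb j ▸ Nat.add_le_mul_div_two_add_one hk h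
  have hn : n + a 0 ≤ k * b l := by rw [ha] at hn_hi; omega
  have hb0l : b 0 ≤ b l := by
    rw [hb, hb]; exact Nat.div_le_div_right (Nat.mul_le_mul_left k h0l)
  have h2al : 2 * a l ≤ b l := hb l ▸ Nat.two_mul_le_mul_div_two hk
  have hbl : k * a l ≤ 2 * b l + 1 := by rw [hb]; omega
  obtain ⟨x, hx, y, j, hy, hbj, hxy⟩ :
      ∃ x ∈ Icc (a l) (b l), ∃ y j, y ∈ Icc (a j) (b j) ∧ b j ≤ b l ∧ n + y = k * x := by
    by_cases h : k * a l ≤ n + b 0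
    · obtain ⟨x, hx, y, hy, e⟩ :=
        Nat.exists_mem_Icc_add_eq_mul (by omega) (by omega) (hspan 0 ha0) h hn
      exact ⟨x, hx, y, 0, hy, hb0l, e⟩
    · have hkb : 2 * (k * a l) ≤ k * b l := by
        rw [mul_left_comm]; exact Nat.mul_le_mul_left k h2al
      have hka : a l ≤ k * a l := Nat.le_mul_of_pos_left _ (by omega)
      obtain ⟨x, hx, y, hy, e⟩ := Nat.exists_mem_Icc_add_eq_mul (c := a l) (d := b l) (n := n)
        (by omega) (by omega) (hspan l (by omega)) (by omega) (by omega)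
      exact ⟨x, hx, y, l, hy, le_rfl, e⟩
  exact ⟨x, ⟨l, hx⟩, y, ⟨j, hy⟩, hx.2.trans_lt hn_lo,
    (hy.2.trans hbj).trans_lt hn_lo, hxy⟩
end

section
/- Let a₀ ≥ 3 and k ≥ 4 be integers. Let A ⊆ ℕ be the set defined by the greedy rule: a₀ ∈ A, and for n > a₀, n ∈ A if and only if there do not exist a, b ∈ A with a < n, b < n and n = k·b − a. Then A = ⋃_{l≥0} [a_l, b_l] ∩ ℕ, where b₀ = ⌊k·a₀/2⌋, a_l = k·b_{l−1} − a₀ + 1, and b_l = ⌊k·a_l/2⌋ for l ≥ 1. -/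
/-!
The greedy rule determines its set uniquely (strong induction), so it suffices to check that
the union of the blocks `[a l, b l]` obeys the rule. If `n` lies in block `l`, a representation
`n + x = k * y` is impossible: `y` in an earlier block forces `x < a₀`, and `y` in block `l`
forces `k * y ≥ k * a l ≥ 2 * b l > n + x`. If `n` lies in the gap `(b l, a (l + 1))`, the numbers
`k * y - n` with `y` in block `l` form a progression of step `k` that overlaps some block
`[a j, b j]` with `j ≤ l`; blocks have at least `k` elements, so the progression hits one.
-/

structure IsGreedySet (k a₀ : ℕ) (A : Set ℕ) : Prop where
  notMem_of_lt : ∀ m < a₀, m ∉ A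
  start_mem : a₀ ∈ A
  mem_iff : ∀ n > a₀,
    (n ∈ A ↔ ¬ ∃ x ∈ A, ∃ y ∈ A, x < n ∧ y < n ∧ n + x = k * y)

theorem IsGreedySet.eq {k a₀ : ℕ} {A B : Set ℕ} (hA : IsGreedySet k a₀ A)
    (hB : IsGreedySet k a₀ B) : A = B := by
  ext n
  induction n using Nat.strong_induction_on with
  | _ n ih =>
  rcases lt_trichotomy n a₀ with hn | rfl | hn
  · exact iff_of_false (hA.notMem_of_lt n hn) (hB.notMem_of_lt n hn)
  · exact iff_of_true hA.start_mem hB.start_mem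
  · rw [hA.mem_iff n hn, hB.mem_iff n hn]
    refine not_congr ⟨?_, ?_⟩ <;> rintro ⟨x, hx, y, hy, hxn, hyn, hxy⟩
    · exact ⟨x, (ih x hxn).1 hx, y, (ih y hyn).1 hy, hxn, hyn, hxy⟩
    · exact ⟨x, (ih x hxn).2 hx, y, (ih y hyn).2 hy, hxn, hyn, hxy⟩

theorem StrictMono.exists_apply_le_lt_apply_succ {f : ℕ → ℕ} (hf : StrictMono f) {m : ℕ}
    (hm : f 0 ≤ m) : ∃ l, f l ≤ m ∧ m < f (l + 1) := by
  induction m, hm using Nat.le_induction with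
  | base => exact ⟨0, le_rfl, hf (Nat.lt_succ_self 0)⟩
  | succ m _ ih =>
    obtain ⟨l, hlm, hml⟩ := ih
    rcases (show m + 1 ≤ f (l + 1) from hml).lt_or_eq with hlt | heq
    · exact ⟨l, by omega, hlt⟩
    · exact ⟨l + 1, heq.ge, by rw [heq]; exact hf (Nat.lt_succ_self _)⟩

theorem exists_mem_Icc_mul_mem_Icc {k c d u v : ℕ} (hk : 0 < k) (hcd : c ≤ d)
    (hlen : u + k ≤ v + 1) (hu : u ≤ k * d) (hv : k * c ≤ v) :
    ∃ y ∈ Set.Icc c d, k * y ∈ Set.Icc u v := by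
  by_cases hc : u ≤ k * c
  · exact ⟨c, ⟨le_rfl, hcd⟩, hc, hv⟩
  -- otherwise `y = ⌈u / k⌉`
  obtain ⟨y, r, hr, hyr⟩ : ∃ y r, r < k ∧ u + (k - 1) = k * y + r :=
    ⟨_, _, Nat.mod_lt _ hk, (Nat.div_add_mod _ k).symm⟩
  have hcy : c < y := Nat.lt_of_mul_lt_mul_left (a := k) (by omega)
  have hyd : y < d + 1 := Nat.lt_of_mul_lt_mul_left (a := k) (by rw [mul_add]; omega)
  exact ⟨y, ⟨hcy.le, by omega⟩, by omega, by omega⟩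

structure IsBlockSeq (k a₀ : ℕ) (a b : ℕ → ℕ) : Prop where
  four_le : 4 ≤ k
  three_le : 3 ≤ a₀
  a_zero : a 0 = a₀
  b_eq : ∀ l, b l = k * a l / 2
  a_succ : ∀ l, a (l + 1) = k * b l - a₀ + 1

def blocks (a b : ℕ → ℕ) : Set ℕ := {m | ∃ l, a l ≤ m ∧ m ≤ b l}

namespace IsBlockSeq

variable {k a₀ : ℕ} {a b : ℕ → ℕ}

theorem two_mul_b_le_mul_a (h : IsBlockSeq k a₀ a b) (l : ℕ) : 2 * b l ≤ k * a l := by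
  rw [h.b_eq]; omega

theorem mul_a_le_two_mul_b_add_one (h : IsBlockSeq k a₀ a b) (l : ℕ) :
    k * a l ≤ 2 * b l + 1 := by
  rw [h.b_eq]; omega

theorem a_le_b (h : IsBlockSeq k a₀ a b) (l : ℕ) : a l ≤ b l := by
  have : 4 * a l ≤ k * a l := Nat.mul_le_mul_right _ h.four_le
  have := h.mul_a_le_two_mul_b_add_one l
  omega

theorem four_mul_b_le_mul_b (h : IsBlockSeq k a₀ a b) (l : ℕ) : 4 * b l ≤ k * b l :=
  Nat.mul_le_mul_right _ h.four_le

theorem a₀_le_a (h : IsBlockSeq k a₀ a b) (l : ℕ) : a₀ ≤ a l := by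
  induction l with
  | zero => exact h.a_zero.ge
  | succ l ih =>
    have := h.a_le_b l
    have := h.four_mul_b_le_mul_b l
    rw [h.a_succ]; omega

theorem mul_b_add_one (h : IsBlockSeq k a₀ a b) (l : ℕ) : k * b l + 1 = a (l + 1) + a₀ := by
  have := h.a₀_le_a l
  have := h.a_le_b l
  have := h.four_mul_b_le_mul_b l
  rw [h.a_succ]; omega

theorem a_add_le_b (h : IsBlockSeq k a₀ a b) (l : ℕ) : a l + (k - 1) ≤ b l := by
  have ha : 3 ≤ a l := h.three_le.trans (h.a₀_le_a l)
  have hk := h.four_le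
  have : 2 * a l + 2 * k ≤ k * a l + 2 := by nlinarith
  rw [h.b_eq]; omega

theorem b_lt_a_succ (h : IsBlockSeq k a₀ a b) (l : ℕ) : b l < a (l + 1) := by
  have := h.mul_b_add_one l
  have := h.four_mul_b_le_mul_b l
  have := h.a₀_le_a l
  have := h.a_le_b l
  omega

theorem strictMono_a (h : IsBlockSeq k a₀ a b) : StrictMono a :=
  strictMono_nat_of_lt_succ fun l => (h.a_le_b l).trans_lt (h.b_lt_a_succ l)

theorem monotone_b (h : IsBlockSeq k a₀ a b) : Monotone b := fun i j hij => by
  rw [h.b_eq, h.b_eq]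
  exact Nat.div_le_div_right (Nat.mul_le_mul_left _ (h.strictMono_a.monotone hij))

theorem notMem_blocks_of_b_lt_of_lt_a (h : IsBlockSeq k a₀ a b) {l n : ℕ} (hbn : b l < n)
    (hna : n < a (l + 1)) : n ∉ blocks a b := by
  rintro ⟨j, hjn, hnj⟩
  rcases le_or_gt j l with hjl | hlj
  · exact absurd (h.monotone_b hjl) (by omega)
  · exact absurd (h.strictMono_a.monotone (show l + 1 ≤ j from hlj)) (by omega)

theorem add_ne_mul_of_mem_block (h : IsBlockSeq k a₀ a b) {l n x y : ℕ} (hln : a l ≤ n)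
    (hnl : n ≤ b l) (hy : y ∈ blocks a b) (hyn : y < n) (hx : a₀ ≤ x) (hxn : x < n) :
    n + x ≠ k * y := by
  obtain ⟨j, hjy, hyj⟩ := hy
  intro hxy
  rcases lt_trichotomy j l with hjl | rfl | hlj
  · -- `k * y ≤ k * b (l - 1) = a l + a₀ - 1`
    obtain ⟨i, rfl⟩ : ∃ i, l = i + 1 := Nat.exists_eq_add_one.2 (by omega)
    have := h.mul_b_add_one i
    have := Nat.mul_le_mul_left k (hyj.trans (h.monotone_b (Nat.lt_succ_iff.1 hjl)))
    omega
  · have := Nat.mul_le_mul_left k hjy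
    have := h.two_mul_b_le_mul_a j
    omega
  · have := h.strictMono_a.monotone (show l + 1 ≤ j from hlj)
    have := h.b_lt_a_succ l
    omega

theorem exists_add_eq_mul_of_b_lt_of_lt_a (h : IsBlockSeq k a₀ a b) {l n : ℕ} (hbn : b l < n)
    (hna : n < a (l + 1)) :
    ∃ x ∈ blocks a b, ∃ y ∈ blocks a b, x < n ∧ y < n ∧ n + x = k * y := by
  have hE := h.mul_b_add_one l
  have hal := h.a_le_b l
  have hbl := h.four_mul_b_le_mul_b l
  have hla := h.a₀_le_a l
  -- `j` is the block reaching the top `k * b l - n` of the progression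
  obtain ⟨j, hjt, htj⟩ : ∃ j, a j ≤ k * b l - n ∧ k * b l - n < a (j + 1) :=
    h.strictMono_a.exists_apply_le_lt_apply_succ (by rw [h.a_zero]; omega)
  have hjl : j ≤ l :=
    Nat.lt_add_one_iff.1 (h.strictMono_a.lt_iff_lt.1 (by omega : a j < a (l + 1)))
  have hcover : k * a l ≤ b j + n := by
    have := h.mul_a_le_two_mul_b_add_one l
    rcases hjl.eq_or_lt with rfl | hjl
    · omega
    · have := h.strictMono_a.monotone (show j + 1 ≤ l from hjl)
      omega
  obtain ⟨y, ⟨hly, hyl⟩, hny, hyn⟩ :=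
    exists_mem_Icc_mul_mem_Icc (u := a j + n) (v := b j + n)
    (by have := h.four_le; omega) hal (by have := h.a_add_le_b j; omega) (by omega) hcover
  have hbj := h.monotone_b hjl
  refine ⟨k * y - n, ⟨j, by omega, by omega⟩, y, ⟨l, hly, hyl⟩, ?_, ?_, ?_⟩ <;> omega

theorem isGreedySet_blocks (h : IsBlockSeq k a₀ a b) : IsGreedySet k a₀ (blocks a b) where
  notMem_of_lt m hm := fun ⟨l, hlm, _⟩ => absurd (h.a₀_le_a l) (by omega)
  start_mem := ⟨0, h.a_zero.le, h.a_zero ▸ h.a_le_b 0⟩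
  mem_iff n hn := by
    obtain ⟨l, hln, hnl⟩ := h.strictMono_a.exists_apply_le_lt_apply_succ
      (m := n) (by rw [h.a_zero]; omega)
    by_cases hnb : n ≤ b l
    · refine iff_of_true ⟨l, hln, hnb⟩ ?_
      rintro ⟨x, ⟨j, hjx, _⟩, y, hy, hxn, hyn, hxy⟩
      exact h.add_ne_mul_of_mem_block hln hnb hy hyn ((h.a₀_le_a j).trans hjx) hxn hxy
    · exact iff_of_false (h.notMem_blocks_of_b_lt_of_lt_a (by omega) hnl)
        (not_not.2 (h.exists_add_eq_mul_of_b_lt_of_lt_a (by omega) hnl))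

end IsBlockSeq

theorem stmt_12 (k a₀ : ℕ) (hk : 4 ≤ k) (ha₀ : 3 ≤ a₀)
    (a b : ℕ → ℕ) (ha0 : a 0 = a₀)
    (hb : ∀ l, b l = k * a l / 2)
    (ha : ∀ l, a (l + 1) = k * b l - a₀ + 1)
    (A : Set ℕ)
    (hlow : ∀ m < a₀, m ∉ A) (hmem : a₀ ∈ A)
    (hgreedy : ∀ n > a₀,
      (n ∈ A ↔ ¬ ∃ x ∈ A, ∃ y ∈ A, x < n ∧ y < n ∧ n + x = k * y)) :
    A = {m : ℕ | ∃ l, a l ≤ m ∧ m ≤ b l} :=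
  IsGreedySet.eq ⟨hlow, hmem, hgreedy⟩
    (IsBlockSeq.isGreedySet_blocks ⟨hk, ha₀, ha0, hb, ha⟩)
end

section
/- Let k ≥ 1, and let n be an integer with 3·4^{k−1} ≤ n < 4^k written in base 4 as n = Σ_{i=0}^{k−1} μ_i 4^i with μ_i ∈ {0,1,2,3}. Define digits ε_i^{(1)}, ε_i^{(2)} ∈ {1,2} by: (ε^{(1)}, ε^{(2)}) = (2,1) if μ_i = 0; (1,1) if μ_i = 1; (2,2) if μ_i = 2; (1,2) if μ_i = 3. Then a = Σ ε_i^{(1)} 4^i and b = Σ ε_i^{(2)} 4^i satisfy 2b = a + n and a < b < n. -/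
/-!
Digitwise, the table gives `2 ε⁽²⁾ᵢ = ε⁽¹⁾ᵢ + μᵢ`, so `2b = a + n`. Then `a < b < n` is equivalent
to `a < n`, which holds because the digits of `a` are at most `2`: `3a < 2·4^k ≤ 8·4^(k-1) < 3n`.
-/

open Finset

def DigitPair (μ e₁ e₂ : ℕ) : Prop :=
  (μ = 0 → e₁ = 2 ∧ e₂ = 1) ∧ (μ = 1 → e₁ = 1 ∧ e₂ = 1) ∧
    (μ = 2 → e₁ = 2 ∧ e₂ = 2) ∧ (μ = 3 → e₁ = 1 ∧ e₂ = 2)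

namespace DigitPair

variable {μ e₁ e₂ : ℕ}

theorem two_mul_eq (h : DigitPair μ e₁ e₂) (hμ : μ ≤ 3) : 2 * e₂ = e₁ + μ := by
  obtain ⟨h0, h1, h2, h3⟩ := h
  interval_cases μ <;> omega

theorem fst_le_two (h : DigitPair μ e₁ e₂) (hμ : μ ≤ 3) : e₁ ≤ 2 := by
  obtain ⟨h0, h1, h2, h3⟩ := h
  interval_cases μ <;> omega

end DigitPair

theorem sum_digit_mul_pow_mul_add_le {b c k : ℕ} {d : ℕ → ℕ} (hd : ∀ i < k, d i ≤ c) :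
    (∑ i ∈ range k, d i * (b + 1) ^ i) * b + c ≤ c * (b + 1) ^ k := by
  have hsum : ∑ i ∈ range k, d i * (b + 1) ^ i ≤ c * ∑ i ∈ range k, (b + 1) ^ i := by
    rw [mul_sum]
    exact sum_le_sum fun i hi => Nat.mul_le_mul_right _ (hd i (mem_range.1 hi))
  calc (∑ i ∈ range k, d i * (b + 1) ^ i) * b + c
      ≤ (c * ∑ i ∈ range k, (b + 1) ^ i) * b + c := by gcongr
    _ = c * ((∑ i ∈ range k, (b + 1) ^ i) * b + 1) := by ring
    _ = c * (b + 1) ^ k := by rw [geom_sum_mul_add]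

theorem stmt_18_general (k n : ℕ)
    (h1 : 3 * 4 ^ (k - 1) ≤ n)
    (μ ε₁ ε₂ : ℕ → ℕ) (hμ : ∀ i < k, μ i ≤ 3)
    (hn : n = ∑ i ∈ Finset.range k, μ i * 4 ^ i)
    (hε : ∀ i < k,
      (μ i = 0 → ε₁ i = 2 ∧ ε₂ i = 1) ∧
      (μ i = 1 → ε₁ i = 1 ∧ ε₂ i = 1) ∧
      (μ i = 2 → ε₁ i = 2 ∧ ε₂ i = 2) ∧
      (μ i = 3 → ε₁ i = 1 ∧ ε₂ i = 2)) :
    2 * (∑ i ∈ Finset.range k, ε₂ i * 4 ^ i)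
        = (∑ i ∈ Finset.range k, ε₁ i * 4 ^ i) + n ∧
      (∑ i ∈ Finset.range k, ε₁ i * 4 ^ i) < ∑ i ∈ Finset.range k, ε₂ i * 4 ^ i ∧
      (∑ i ∈ Finset.range k, ε₂ i * 4 ^ i) < n := by
  have hpair : ∀ i < k, DigitPair (μ i) (ε₁ i) (ε₂ i) := hε
  have hab : 2 * ∑ i ∈ range k, ε₂ i * 4 ^ i = ∑ i ∈ range k, ε₁ i * 4 ^ i + n := by
    rw [hn, mul_sum, ← sum_add_distrib]
    refine sum_congr rfl fun i hi => ?_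
    have hi := mem_range.1 hi
    rw [← mul_assoc, (hpair i hi).two_mul_eq (hμ i hi), add_mul]
  have ha : (∑ i ∈ range k, ε₁ i * 4 ^ i) * 3 + 2 ≤ 2 * 4 ^ k :=
    sum_digit_mul_pow_mul_add_le fun i hi => (hpair i hi).fst_le_two (hμ i hi)
  have hpow : 4 ^ k ≤ 4 * 4 ^ (k - 1) :=
    calc 4 ^ k ≤ 4 ^ (k - 1 + 1) := Nat.pow_le_pow_right (by norm_num) (by omega)
      _ = 4 * 4 ^ (k - 1) := pow_succ' _ _
  exact ⟨hab, by omega, by omega⟩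

theorem stmt_18 (k n : ℕ) (hk : 1 ≤ k)
    (h1 : 3 * 4 ^ (k - 1) ≤ n) (h2 : n < 4 ^ k)
    (μ ε₁ ε₂ : ℕ → ℕ) (hμ : ∀ i < k, μ i ≤ 3)
    (hn : n = ∑ i ∈ Finset.range k, μ i * 4 ^ i)
    (hε : ∀ i < k,
      (μ i = 0 → ε₁ i = 2 ∧ ε₂ i = 1) ∧
      (μ i = 1 → ε₁ i = 1 ∧ ε₂ i = 1) ∧
      (μ i = 2 → ε₁ i = 2 ∧ ε₂ i = 2) ∧
      (μ i = 3 → ε₁ i = 1 ∧ ε₂ i = 2)) :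
    2 * (∑ i ∈ Finset.range k, ε₂ i * 4 ^ i)
        = (∑ i ∈ Finset.range k, ε₁ i * 4 ^ i) + n ∧
      (∑ i ∈ Finset.range k, ε₁ i * 4 ^ i) < ∑ i ∈ Finset.range k, ε₂ i * 4 ^ i ∧
      (∑ i ∈ Finset.range k, ε₂ i * 4 ^ i) < n :=
  stmt_18_general k n h1 μ ε₁ ε₂ hμ hn hε
end
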